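/- The lattice esTam_n is semidistributive: for all fb-tableaux x, y, z of size n, if x ∨ z = y ∨ z then (x ∧ y) ∨ z = x ∨ z, and if x ∧ z = y ∧ z then (x ∨ y) ∧ z = x ∧ z. -/

import Mathlib

open scoped Classical

namespace EsTam

/-- A cell `(i, j)`: `i` is the row index, `j` the column index. -/
abbrev Cell := ℕ × ℕ

/-- Membership in the staircase shape of size `n`: rows `1` and `2` consist of the
cells `(i, j)` with `1 ≤ j ≤ n`, and row `i` for `3 ≤ i ≤ n` consists of the cells
`(i, j)` with `i - 1 ≤ j ≤ n`. -/
def IsCell (n : ℕ) (c : Cell) : Prop :=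
  1 ≤ c.1 ∧ c.1 ≤ n ∧ 1 ≤ c.2 ∧ c.2 ≤ n ∧ (c.1 ≤ 2 ∨ c.1 - 1 ≤ c.2)

/-- The root cell `(1, n)`. -/
def root (n : ℕ) : Cell := (1, n)

/-- The border cells `(i, i - 1)` for `2 ≤ i ≤ n`. -/
def IsBorder (n : ℕ) (c : Cell) : Prop :=
  2 ≤ c.1 ∧ c.1 ≤ n ∧ c.2 = c.1 - 1

/-- An fb-tableau of size `n`: a set of cells of the staircase shape containing
the root and all border cells, and such that every cell other than the root has a
cell of the tableau strictly to its left in its row (same `i`, larger `j`) or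
strictly above it in its column (same `j`, smaller `i`). -/
structure FB (n : ℕ) where
  cells : Set Cell
  isCell_of_mem : ∀ c ∈ cells, IsCell n c
  root_mem : root n ∈ cells
  border_mem : ∀ c : Cell, IsBorder n c → c ∈ cells
  supported : ∀ c ∈ cells, c ≠ root n →
    (∃ j', c.2 < j' ∧ ((c.1, j') : Cell) ∈ cells) ∨
    (∃ i', i' < c.1 ∧ ((i', c.2) : Cell) ∈ cells)

variable {n : ℕ}

/-- `c` is a left-arrow of `T`: a cell of `T`, other than the root, with no cell of
`T` strictly to its left in its row. -/
def IsLeftArrow (T : FB n) (c : Cell) : Prop :=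
  c ∈ T.cells ∧ c ≠ root n ∧ ∀ j', c.2 < j' → ((c.1, j') : Cell) ∉ T.cells

/-- `c` is an up-arrow of `T`: a cell of `T`, other than the root, with no cell of
`T` strictly above it in its column. -/
def IsUpArrow (T : FB n) (c : Cell) : Prop :=
  c ∈ T.cells ∧ c ≠ root n ∧ ∀ i', i' < c.1 → ((i', c.2) : Cell) ∉ T.cells

/-- The row space of `T`: cells lying, in their row, weakly to the right of the
root or of a left-arrow of `T`. -/
def RowSp (T : FB n) : Set Cell :=
  {c | IsCell n c ∧ ∃ j', c.2 ≤ j' ∧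
    (((c.1, j') : Cell) = root n ∨ IsLeftArrow T (c.1, j'))}

/-- The column space of `T`: cells lying, in their column, weakly below the root or
an up-arrow of `T`. -/
def ColSp (T : FB n) : Set Cell :=
  {c | IsCell n c ∧ ∃ i', i' ≤ c.1 ∧
    (((i', c.2) : Cell) = root n ∨ IsUpArrow T (i', c.2))}

/-- `c` is a free cell of `T`: it lies strictly below the up-arrow of `T` in its
column and strictly to the right of the left-arrow of `T` in its row. -/
def IsFree (T : FB n) (c : Cell) : Prop :=
  IsCell n c ∧ (∃ i', i' < c.1 ∧ IsUpArrow T (i', c.2)) ∧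
    (∃ j', c.2 < j' ∧ IsLeftArrow T (c.1, j'))

/-- The relation `S ⊲ T` on fb-tableaux of size `n`. -/
def Lhd (S T : FB n) : Prop :=
  ColSp S ⊆ ColSp T ∧ RowSp T ⊆ RowSp S ∧
    ∀ c : Cell, IsFree S c → IsFree T c → c ∈ S.cells → c ∈ T.cells

/-- `T` covers `S` in `esTam n`. -/
def CovRel (S T : FB n) : Prop :=
  Lhd S T ∧ S ≠ T ∧ ∀ U : FB n, Lhd S U → Lhd U T → U = S ∨ U = T

/-- `m` is the greatest lower bound of `x` and `y` in `esTam n`. -/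
def IsMeet (x y m : FB n) : Prop :=
  Lhd m x ∧ Lhd m y ∧ ∀ t : FB n, Lhd t x → Lhd t y → Lhd t m

/-- `j` is the least upper bound of `x` and `y` in `esTam n`. -/
def IsJoin (x y j : FB n) : Prop :=
  Lhd x j ∧ Lhd y j ∧ ∀ t : FB n, Lhd x t → Lhd y t → Lhd j t

/-- `T` is join-irreducible: it covers exactly one element. -/
def JoinIrr (T : FB n) : Prop := ∃! S : FB n, CovRel S T

/-- `T` is meet-irreducible: it is covered by exactly one element. -/
def MeetIrr (T : FB n) : Prop := ∃! S : FB n, CovRel T S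

/-- A strict chain `f 0 ⊲ f 1 ⊲ ⋯ ⊲ f m` of length `m`. -/
def IsStrictChain {m : ℕ} (f : Fin (m + 1) → FB n) : Prop :=
  ∀ i j : Fin (m + 1), i < j → Lhd (f i) (f j) ∧ f i ≠ f j

/-- `T` is small: every cell of `T` other than the root is an arrow. -/
def IsSmall (T : FB n) : Prop :=
  ∀ c ∈ T.cells, c ≠ root n → IsLeftArrow T c ∨ IsUpArrow T c

/-- `T` is binary: `T` has no free cells. -/
def IsBinary (T : FB n) : Prop := ∀ c : Cell, ¬ IsFree T c

/-- `c` lies strictly above the up-arrow of `T` in its column. -/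
def PointedUp (T : FB n) (c : Cell) : Prop :=
  ∃ i', c.1 < i' ∧ IsUpArrow T (i', c.2)

/-- `c` is pointed by a left-arrow of `T`: it lies strictly to the left of the
left-arrow of `T` in its row. -/
def PointedLeft (T : FB n) (c : Cell) : Prop :=
  ∃ j', j' < c.2 ∧ IsLeftArrow T (c.1, j')

end EsTam

/-!
An fb-tableau is determined by its arrows, namely the column `leftCol T i` of the left-arrow of
each row and the row `upRow T j` of the up-arrow of each column, together with its free dots; and
`S ⊲ T` says `upRow T ≤ upRow S`, `leftCol T ≤ leftCol S`, and that common free dots of `S`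
persist in `T`. Comparing a join or meet with an explicitly built candidate bound identifies its
arrows and free dots: `x ∨ z` has the left-arrows `min (leftCol x i) (leftCol z i)`, each of its
up-arrows is the lowest one the support condition allows, and its free dots are border cells or
free dots of `x` or of `z`; dually for `x ∧ y`. Semidistributivity is then checked coordinatewise:
for instance, if `x ∨ z = y ∨ z` and in row `i` the left-arrow of `x ∨ z` is not that of `z`,
then `x` and `y` have the same left-arrow in row `i`, and hence so does `x ∧ y`.
-/

namespace EsTam

variable {n : ℕ} {S T V : FB n} {i j : ℕ} {c : Cell}

lemma FB.one_le (T : FB n) : 1 ≤ n := (T.isCell_of_mem _ T.root_mem).2.1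

lemma FB.ext_cells (h : S.cells = T.cells) : S = T := by
  cases S; cases T; cases h; rfl

section Arrows

/-- The column of the left-arrow of row `i`; it is `n` in row `1` (the root) and `0` outside
the rows `1, …, n`. -/
noncomputable def leftCol (T : FB n) (i : ℕ) : ℕ := sSup {j | (i, j) ∈ T.cells}

/-- The row of the up-arrow of column `j`; it is `1` in column `n` (the root) and `0` outside
the columns `1, …, n`. -/
noncomputable def upRow (T : FB n) (j : ℕ) : ℕ := sInf {i | (i, j) ∈ T.cells}

lemma bddAbove_row (T : FB n) (i : ℕ) : BddAbove {j | (i, j) ∈ T.cells} :=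
  ⟨n, fun _ h => (T.isCell_of_mem _ h).2.2.2.1⟩

lemma le_leftCol_of_mem (h : (i, j) ∈ T.cells) : j ≤ leftCol T i :=
  le_csSup (bddAbove_row T i) h

lemma leftCol_le (T : FB n) (i : ℕ) : leftCol T i ≤ n :=
  csSup_le' fun _ h => (T.isCell_of_mem _ h).2.2.2.1

lemma mem_leftCol (T : FB n) (h1 : 1 ≤ i) (h2 : i ≤ n) : (i, leftCol T i) ∈ T.cells := by
  refine Nat.sSup_mem ?_ (bddAbove_row T i)
  rcases (show i = 1 ∨ 2 ≤ i by omega) with rfl | hi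
  · exact ⟨n, T.root_mem⟩
  · exact ⟨i - 1, T.border_mem _ ⟨hi, h2, rfl⟩⟩

lemma upRow_le_of_mem (h : (i, j) ∈ T.cells) : upRow T j ≤ i := Nat.sInf_le h

lemma mem_upRow (T : FB n) (h1 : 1 ≤ j) (h2 : j ≤ n) : (upRow T j, j) ∈ T.cells := by
  refine Nat.sInf_mem (s := {i | (i, j) ∈ T.cells}) ?_
  rcases (show j = n ∨ j < n by omega) with rfl | hj
  · exact ⟨1, T.root_mem⟩
  · exact ⟨j + 1, T.border_mem _ ⟨by omega, by omega, rfl⟩⟩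

lemma one_le_upRow (T : FB n) (h1 : 1 ≤ j) (h2 : j ≤ n) : 1 ≤ upRow T j :=
  (T.isCell_of_mem _ (mem_upRow T h1 h2)).1

lemma upRow_le_add_one (T : FB n) (h1 : 1 ≤ j) (h2 : j < n) : upRow T j ≤ j + 1 :=
  upRow_le_of_mem (T.border_mem _ ⟨by omega, by omega, rfl⟩)

lemma sub_one_le_leftCol (T : FB n) (h1 : 2 ≤ i) (h2 : i ≤ n) : i - 1 ≤ leftCol T i :=
  le_leftCol_of_mem (T.border_mem _ ⟨h1, h2, rfl⟩)

lemma leftCol_one (T : FB n) : leftCol T 1 = n :=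
  (leftCol_le T 1).antisymm (le_leftCol_of_mem T.root_mem)

lemma upRow_self (T : FB n) : upRow T n = 1 :=
  (upRow_le_of_mem T.root_mem).antisymm (one_le_upRow T T.one_le le_rfl)

lemma leftCol_eq_zero (T : FB n) (hi : i = 0 ∨ n < i) : leftCol T i = 0 := by
  have : {j | (i, j) ∈ T.cells} = ∅ := Set.eq_empty_of_forall_notMem fun j hj => by
    obtain ⟨h1, h2, -⟩ := T.isCell_of_mem _ hj
    dsimp only at h1 h2
    omega
  rw [leftCol, this, csSup_empty, bot_eq_zero]

lemma upRow_eq_zero (T : FB n) (hj : j = 0 ∨ n < j) : upRow T j = 0 := by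
  have : {i | (i, j) ∈ T.cells} = ∅ := Set.eq_empty_of_forall_notMem fun i hi => by
    obtain ⟨-, -, h1, h2, -⟩ := T.isCell_of_mem _ hi
    dsimp only at h1 h2
    omega
  rw [upRow, this, Nat.sInf_empty]

lemma leftCol_eq_leftCol (S T : FB n) (hi : i < 2 ∨ n < i) : leftCol S i = leftCol T i := by
  rcases (show i = 1 ∨ i = 0 ∨ n < i by omega) with rfl | hi | hi
  · rw [leftCol_one, leftCol_one]
  all_goals rw [leftCol_eq_zero S (by omega), leftCol_eq_zero T (by omega)]

lemma upRow_eq_upRow (S T : FB n) (hj : j < 1 ∨ n ≤ j) : upRow S j = upRow T j := by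
  rcases (show j = n ∨ j = 0 ∨ n < j by omega) with rfl | hj | hj
  · rw [upRow_self, upRow_self]
  all_goals rw [upRow_eq_zero S (by omega), upRow_eq_zero T (by omega)]

lemma leftCol_le_leftCol (h : ∀ i, 2 ≤ i → i ≤ n → leftCol S i ≤ leftCol T i) :
    leftCol S ≤ leftCol T := fun i =>
  if hi : 2 ≤ i ∧ i ≤ n then h i hi.1 hi.2 else (leftCol_eq_leftCol S T (by omega)).le

lemma upRow_le_upRow (h : ∀ j, 1 ≤ j → j < n → upRow S j ≤ upRow T j) :
    upRow S ≤ upRow T := fun j =>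
  if hj : 1 ≤ j ∧ j < n then h j hj.1 hj.2 else (upRow_eq_upRow S T (by omega)).le

lemma isLeftArrow_iff : IsLeftArrow T c ↔ 2 ≤ c.1 ∧ c.1 ≤ n ∧ c.2 = leftCol T c.1 := by
  obtain ⟨i, j⟩ := c
  constructor
  · rintro ⟨hmem, hroot, hmax⟩
    obtain ⟨h1, h2, -⟩ := T.isCell_of_mem _ hmem
    have hj : j = leftCol T i := (le_leftCol_of_mem hmem).antisymm
      (not_lt.1 fun hlt => hmax _ hlt (mem_leftCol T h1 h2))
    refine ⟨?_, h2, hj⟩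
    by_contra hi
    obtain rfl : i = 1 := by dsimp only at h1; omega
    exact hroot (by rw [hj, leftCol_one]; rfl)
  · rintro ⟨h1, h2, hj⟩
    obtain rfl : j = leftCol T i := hj
    refine ⟨mem_leftCol T (by omega) h2, fun h => ?_, fun j hj hmem => ?_⟩
    · have : i = 1 := congrArg Prod.fst h
      omega
    · exact (le_leftCol_of_mem hmem).not_gt hj

lemma isUpArrow_iff : IsUpArrow T c ↔ 1 ≤ c.2 ∧ c.2 < n ∧ c.1 = upRow T c.2 := by
  obtain ⟨i, j⟩ := c
  constructor
  · rintro ⟨hmem, hroot, hmin⟩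
    obtain ⟨-, -, h1, h2, -⟩ := T.isCell_of_mem _ hmem
    have hi : i = upRow T j := (not_lt.1 fun hlt => hmin _ hlt (mem_upRow T h1 h2)).antisymm
      (upRow_le_of_mem hmem)
    refine ⟨h1, ?_, hi⟩
    by_contra hj
    obtain rfl : j = n := by dsimp only at h2; omega
    exact hroot (by rw [hi, upRow_self]; rfl)
  · rintro ⟨h1, h2, hi⟩
    obtain rfl : i = upRow T j := hi
    refine ⟨mem_upRow T h1 h2.le, fun h => ?_, fun i hi hmem => ?_⟩
    · have : j = n := congrArg Prod.snd h
      omega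
    · exact (upRow_le_of_mem hmem).not_gt hi

lemma upRow_leftCol_lt (T : FB n) (h1 : 2 ≤ i) (h2 : i ≤ n) : upRow T (leftCol T i) < i := by
  have hroot : (i, leftCol T i) ≠ root n := fun h => by
    have : i = 1 := congrArg Prod.fst h
    omega
  rcases T.supported _ (mem_leftCol T (by omega) h2) hroot with
    ⟨j', hj', hmem⟩ | ⟨i', hi', hmem⟩
  · exact absurd (le_leftCol_of_mem hmem) (not_le.2 hj')
  · exact (upRow_le_of_mem hmem).trans_lt hi'

lemma lt_leftCol_upRow (T : FB n) (h1 : 1 ≤ j) (h2 : j < n) : j < leftCol T (upRow T j) := by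
  have hroot : (upRow T j, j) ≠ root n := fun h => by
    have : j = n := congrArg Prod.snd h
    omega
  rcases T.supported _ (mem_upRow T h1 h2.le) hroot with ⟨j', hj', hmem⟩ | ⟨i', hi', hmem⟩
  · exact hj'.trans_le (le_leftCol_of_mem hmem)
  · exact absurd (upRow_le_of_mem hmem) (not_le.2 hi')

lemma isFree_iff : IsFree T c ↔ IsCell n c ∧ upRow T c.2 < c.1 ∧ c.2 < leftCol T c.1 := by
  constructor
  · rintro ⟨hc, ⟨i', hi', hU⟩, ⟨j', hj', hL⟩⟩
    obtain ⟨-, -, hi⟩ := isUpArrow_iff.1 hU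
    obtain ⟨-, -, hj⟩ := isLeftArrow_iff.1 hL
    exact ⟨hc, hi ▸ hi', hj ▸ hj'⟩
  · rintro ⟨hc, hU, hL⟩
    obtain ⟨-, h2, h3, -, -⟩ := id hc
    have hj : c.2 < n := hL.trans_le (leftCol_le T _)
    have hi : 2 ≤ c.1 := by have := one_le_upRow T h3 hj.le; omega
    exact ⟨hc, ⟨_, hU, isUpArrow_iff.2 ⟨h3, hj, rfl⟩⟩,
      ⟨_, hL, isLeftArrow_iff.2 ⟨hi, h2, rfl⟩⟩⟩

lemma IsFree.bounds (h : IsFree T c) : 2 ≤ c.1 ∧ c.1 ≤ n ∧ 1 ≤ c.2 ∧ c.2 < n := by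
  obtain ⟨⟨-, h2, h3, -, -⟩, hU, hL⟩ := isFree_iff.1 h
  have hj : c.2 < n := hL.trans_le (leftCol_le T _)
  have := one_le_upRow T h3 hj.le
  omega

lemma mem_cells_cases (h : c ∈ T.cells) :
    c = root n ∨ IsLeftArrow T c ∨ IsUpArrow T c ∨ IsFree T c := by
  by_cases hr : c = root n
  · exact Or.inl hr
  by_cases hL : IsLeftArrow T c
  · exact Or.inr (Or.inl hL)
  by_cases hU : IsUpArrow T c
  · exact Or.inr (Or.inr (Or.inl hU))
  simp only [IsLeftArrow, IsUpArrow, not_and, not_forall, not_not] at hL hU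
  obtain ⟨j', hj', hj'mem⟩ := hL h hr
  obtain ⟨i', hi', hi'mem⟩ := hU h hr
  exact Or.inr <| Or.inr <| Or.inr <| isFree_iff.2 ⟨T.isCell_of_mem c h,
    (upRow_le_of_mem hi'mem).trans_lt hi', hj'.trans_le (le_leftCol_of_mem hj'mem)⟩

lemma cells_subset_of_arrows_eq (hL : leftCol S = leftCol T) (hU : upRow S = upRow T)
    (hF : ∀ c, IsFree S c → c ∈ S.cells → c ∈ T.cells) : S.cells ⊆ T.cells := by
  intro c hc
  rcases mem_cells_cases hc with rfl | h | h | h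
  · exact T.root_mem
  · exact (isLeftArrow_iff.2 (hL ▸ isLeftArrow_iff.1 h)).1
  · exact (isUpArrow_iff.2 (hU ▸ isUpArrow_iff.1 h)).1
  · exact hF c h hc

end Arrows

section Order

lemma mem_rowSp_iff : c ∈ RowSp T ↔ IsCell n c ∧ c.2 ≤ leftCol T c.1 := by
  constructor
  · rintro ⟨hc, j', hj', h | h⟩
    · have : c.1 = 1 := congrArg Prod.fst h
      exact ⟨hc, by rw [this, leftCol_one]; exact hc.2.2.2.1⟩
    · obtain ⟨-, -, hj⟩ := isLeftArrow_iff.1 h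
      exact ⟨hc, hj'.trans hj.le⟩
  · rintro ⟨hc, h⟩
    rcases (show c.1 = 1 ∨ 2 ≤ c.1 by have := hc.1; omega) with h1 | h1
    · exact ⟨hc, n, hc.2.2.2.1, Or.inl (by rw [root, h1])⟩
    · exact ⟨hc, _, h, Or.inr (isLeftArrow_iff.2 ⟨h1, hc.2.1, rfl⟩)⟩

lemma mem_colSp_iff : c ∈ ColSp T ↔ IsCell n c ∧ upRow T c.2 ≤ c.1 := by
  constructor
  · rintro ⟨hc, i', hi', h | h⟩
    · have : c.2 = n := congrArg Prod.snd h
      exact ⟨hc, by rw [this, upRow_self]; exact hc.1⟩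
    · obtain ⟨-, -, hi⟩ := isUpArrow_iff.1 h
      exact ⟨hc, hi ▸ hi'⟩
  · rintro ⟨hc, h⟩
    rcases (show c.2 = n ∨ c.2 < n by have := hc.2.2.2.1; omega) with h1 | h1
    · exact ⟨hc, 1, hc.1, Or.inl (by rw [root, h1])⟩
    · exact ⟨hc, _, h, Or.inr (isUpArrow_iff.2 ⟨hc.2.2.1, h1, rfl⟩)⟩

lemma rowSp_subset_rowSp_iff : RowSp T ⊆ RowSp S ↔ leftCol T ≤ leftCol S := by
  refine ⟨fun h => leftCol_le_leftCol fun i h1 h2 => ?_, fun h c hc => ?_⟩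
  · have hc := T.isCell_of_mem _ (mem_leftCol T (by omega) h2)
    exact (mem_rowSp_iff.1 (h (mem_rowSp_iff.2 ⟨hc, le_rfl⟩))).2
  · obtain ⟨hc, hle⟩ := mem_rowSp_iff.1 hc
    exact mem_rowSp_iff.2 ⟨hc, hle.trans (h c.1)⟩

lemma colSp_subset_colSp_iff : ColSp S ⊆ ColSp T ↔ upRow T ≤ upRow S := by
  refine ⟨fun h => upRow_le_upRow fun j h1 h2 => ?_, fun h c hc => ?_⟩
  · have hc := S.isCell_of_mem _ (mem_upRow S h1 h2.le)
    exact (mem_colSp_iff.1 (h (mem_colSp_iff.2 ⟨hc, le_rfl⟩))).2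
  · obtain ⟨hc, hle⟩ := mem_colSp_iff.1 hc
    exact mem_colSp_iff.2 ⟨hc, (h c.2).trans hle⟩

lemma lhd_iff : Lhd S T ↔ upRow T ≤ upRow S ∧ leftCol T ≤ leftCol S ∧
    ∀ c, IsFree S c → IsFree T c → c ∈ S.cells → c ∈ T.cells := by
  rw [Lhd, colSp_subset_colSp_iff, rowSp_subset_rowSp_iff]

lemma Lhd.upRow_le (h : Lhd S T) : upRow T ≤ upRow S := (lhd_iff.1 h).1

lemma Lhd.leftCol_le (h : Lhd S T) : leftCol T ≤ leftCol S := (lhd_iff.1 h).2.1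

lemma Lhd.mem (h : Lhd S T) (hS : IsFree S c) (hT : IsFree T c) (hc : c ∈ S.cells) :
    c ∈ T.cells :=
  h.2.2 c hS hT hc

lemma Lhd.trans (h : Lhd S T) (h' : Lhd T V) : Lhd S V := by
  refine lhd_iff.2 ⟨h'.upRow_le.trans h.upRow_le, h'.leftCol_le.trans h.leftCol_le,
    fun c hS hV hc => ?_⟩
  have hT : IsFree T c := isFree_iff.2 ⟨(isFree_iff.1 hS).1,
    (h.upRow_le c.2).trans_lt (isFree_iff.1 hS).2.1,
    (isFree_iff.1 hV).2.2.trans_le (h'.leftCol_le c.1)⟩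
  exact h'.mem hT hV (h.mem hS hT hc)

lemma Lhd.antisymm (h : Lhd S T) (h' : Lhd T S) : S = T := by
  have hL := h'.leftCol_le.antisymm h.leftCol_le
  have hU := h'.upRow_le.antisymm h.upRow_le
  have hfree : ∀ c, IsFree S c ↔ IsFree T c := fun c => by rw [isFree_iff, isFree_iff, hL, hU]
  exact FB.ext_cells <|
    (cells_subset_of_arrows_eq hL hU fun c hc => h.mem hc ((hfree c).1 hc)).antisymm
      (cells_subset_of_arrows_eq hL.symm hU.symm fun c hc => h'.mem hc ((hfree c).2 hc))

end Order

/-- Prescribed left-arrow columns `L i` (rows `2, …, n`), up-arrow rows `U j` (columns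
`1, …, n - 1`) and a set `F` of cells allowed to carry a free dot. -/
structure ArrowData (n : ℕ) where
  L : ℕ → ℕ
  U : ℕ → ℕ
  F : Set Cell
  one_le : 1 ≤ n
  sub_one_le_L : ∀ i, 2 ≤ i → i ≤ n → i - 1 ≤ L i
  L_le : ∀ i, 2 ≤ i → i ≤ n → L i ≤ n
  one_le_U : ∀ j, 1 ≤ j → j < n → 1 ≤ U j
  U_le : ∀ j, 1 ≤ j → j < n → U j ≤ j + 1
  L_supported : ∀ i, 2 ≤ i → i ≤ n → L i = n ∨ U (L i) < i
  U_supported : ∀ j, 1 ≤ j → j < n → U j = 1 ∨ j < L (U j)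
  border_mem_F : ∀ c, IsBorder n c → c ∈ F

namespace ArrowData

variable (D : ArrowData n)

def IsFreeCell (c : Cell) : Prop :=
  IsCell n c ∧ 2 ≤ c.1 ∧ c.2 < n ∧ D.U c.2 < c.1 ∧ c.2 < D.L c.1

def cellSet : Set Cell :=
  {c | c = root n ∨ (2 ≤ c.1 ∧ c.1 ≤ n ∧ c.2 = D.L c.1) ∨
    (1 ≤ c.2 ∧ c.2 < n ∧ c.1 = D.U c.2) ∨ (D.IsFreeCell c ∧ c ∈ D.F)}

variable {D}

lemma isCell_of_mem_cellSet (h : c ∈ D.cellSet) : IsCell n c := by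
  obtain ⟨i, j⟩ := c
  rcases h with h | ⟨h1, h2, h3⟩ | ⟨h1, h2, h3⟩ | ⟨hc, -⟩
  · simp only [root, Prod.mk.injEq] at h
    obtain ⟨rfl, rfl⟩ := h
    exact ⟨le_rfl, D.one_le, D.one_le, le_rfl, Or.inl (by norm_num)⟩
  · dsimp only at h1 h2 h3
    subst h3
    have := D.sub_one_le_L i h1 h2
    exact ⟨by omega, h2, by omega, D.L_le i h1 h2, Or.inr this⟩
  · dsimp only at h1 h2 h3
    subst h3
    have := D.one_le_U j h1 h2
    have := D.U_le j h1 h2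
    exact ⟨by omega, by omega, h1, h2.le, Or.inr (by omega)⟩
  · exact hc.1

lemma border_mem_cellSet (h : IsBorder n c) : c ∈ D.cellSet := by
  obtain ⟨i, j⟩ := c
  obtain ⟨h1, h2, h3⟩ := h
  dsimp only at h1 h2 h3
  subst h3
  by_cases hL : D.L i = i - 1
  · exact Or.inr (Or.inl ⟨h1, h2, hL.symm⟩)
  by_cases hU : D.U (i - 1) = i
  · exact Or.inr (Or.inr (Or.inl ⟨by omega, by omega, hU.symm⟩))
  have := D.sub_one_le_L i h1 h2
  have := D.U_le (i - 1) (by omega) (by omega)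
  refine Or.inr (Or.inr (Or.inr ⟨⟨⟨by omega, h2, by omega, by omega, Or.inr le_rfl⟩,
    h1, ?_⟩, D.border_mem_F _ ⟨h1, h2, rfl⟩⟩))
  dsimp only
  exact ⟨by omega, by omega, by omega⟩

lemma supported_of_mem_cellSet (h : c ∈ D.cellSet) (hr : c ≠ root n) :
    (∃ j', c.2 < j' ∧ (c.1, j') ∈ D.cellSet) ∨
      (∃ i', i' < c.1 ∧ (i', c.2) ∈ D.cellSet) := by
  obtain ⟨i, j⟩ := c
  rcases h with h | ⟨h1, h2, h3⟩ | ⟨h1, h2, h3⟩ | ⟨hc, -⟩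
  · exact absurd h hr
  · dsimp only at h1 h2 h3 ⊢
    subst h3
    rcases (D.L_le i h1 h2).eq_or_lt with hn | hn
    · exact Or.inr ⟨1, by omega, Or.inl (by rw [root, hn])⟩
    · have hU := (D.L_supported i h1 h2).resolve_left hn.ne
      have := D.sub_one_le_L i h1 h2
      exact Or.inr ⟨D.U (D.L i), hU, Or.inr (Or.inr (Or.inl ⟨by omega, hn, rfl⟩))⟩
  · dsimp only at h1 h2 h3 ⊢
    subst h3
    by_cases h1' : D.U j = 1
    · exact Or.inl ⟨n, h2, Or.inl (by rw [root, h1'])⟩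
    · have hL := (D.U_supported j h1 h2).resolve_left h1'
      have := D.one_le_U j h1 h2
      have := D.U_le j h1 h2
      exact Or.inl ⟨D.L (D.U j), hL, Or.inr (Or.inl ⟨by omega, by omega, rfl⟩)⟩
  · exact Or.inl ⟨D.L i, hc.2.2.2.2, Or.inr (Or.inl ⟨hc.2.1, hc.1.2.1, rfl⟩)⟩

variable (D)

def toFB : FB n where
  cells := D.cellSet
  isCell_of_mem _ := isCell_of_mem_cellSet
  root_mem := Or.inl rfl
  border_mem _ := border_mem_cellSet
  supported _ := supported_of_mem_cellSet

lemma leftCol_toFB (h1 : 2 ≤ i) (h2 : i ≤ n) : leftCol D.toFB i = D.L i := by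
  refine le_antisymm (csSup_le' fun j hj => ?_)
    (le_leftCol_of_mem (Or.inr (Or.inl ⟨h1, h2, rfl⟩)))
  rcases hj with h | ⟨-, -, h⟩ | ⟨hj1, hj2, h⟩ | ⟨hc, -⟩
  · have : i = 1 := congrArg Prod.fst h
    omega
  · exact h.le
  · dsimp only at hj1 hj2 h
    subst h
    rcases D.U_supported j hj1 hj2 with h' | h' <;> omega
  · exact hc.2.2.2.2.le

lemma upRow_toFB (h1 : 1 ≤ j) (h2 : j < n) : upRow D.toFB j = D.U j := by
  have hmem : (D.U j, j) ∈ D.toFB.cells := Or.inr (Or.inr (Or.inl ⟨h1, h2, rfl⟩))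
  refine le_antisymm (upRow_le_of_mem hmem) (le_csInf ⟨_, hmem⟩ fun i hi => ?_)
  rcases hi with h | ⟨hi1, hi2, h⟩ | ⟨-, -, h⟩ | ⟨hc, -⟩
  · have : j = n := congrArg Prod.snd h
    omega
  · dsimp only at hi1 hi2 h
    subst h
    rcases D.L_supported i hi1 hi2 with h' | h' <;> omega
  · exact h.ge
  · exact hc.2.2.2.1.le

lemma isFree_toFB_iff : IsFree D.toFB c ↔ D.IsFreeCell c := by
  refine ⟨fun h => ?_, fun ⟨hc, h1, h2, hU, hL⟩ => ?_⟩
  · obtain ⟨h1, h2, h3, h4⟩ := h.bounds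
    obtain ⟨hc, hU, hL⟩ := isFree_iff.1 h
    rw [upRow_toFB D h3 h4] at hU
    rw [leftCol_toFB D h1 h2] at hL
    exact ⟨hc, h1, h4, hU, hL⟩
  · rw [isFree_iff, upRow_toFB D hc.2.2.1 h2, leftCol_toFB D h1 hc.2.1]
    exact ⟨hc, hU, hL⟩

lemma mem_toFB_iff_of_isFree (h : IsFree D.toFB c) : c ∈ D.toFB.cells ↔ c ∈ D.F := by
  obtain ⟨-, h1, -, hU, hL⟩ := (isFree_toFB_iff D).1 h
  refine ⟨fun hc => ?_, fun hF => Or.inr (Or.inr (Or.inr ⟨(isFree_toFB_iff D).1 h, hF⟩))⟩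
  rcases hc with hr | ⟨-, -, h'⟩ | ⟨-, -, h'⟩ | ⟨-, hF⟩
  · have : c.1 = 1 := congrArg Prod.fst hr
    omega
  · omega
  · omega
  · exact hF

lemma lhd_toFB (hU : ∀ j, 1 ≤ j → j < n → D.U j ≤ upRow T j)
    (hL : ∀ i, 2 ≤ i → i ≤ n → D.L i ≤ leftCol T i)
    (hF : ∀ c, IsFree T c → D.IsFreeCell c → c ∈ T.cells → c ∈ D.F) : Lhd T D.toFB :=
  lhd_iff.2 ⟨upRow_le_upRow fun j h1 h2 => (D.upRow_toFB h1 h2).trans_le (hU j h1 h2),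
    leftCol_le_leftCol fun i h1 h2 => (D.leftCol_toFB h1 h2).trans_le (hL i h1 h2),
    fun c hT hD hc => (D.mem_toFB_iff_of_isFree hD).2 (hF c hT ((isFree_toFB_iff D).1 hD) hc)⟩

lemma toFB_lhd (hU : ∀ j, 1 ≤ j → j < n → upRow T j ≤ D.U j)
    (hL : ∀ i, 2 ≤ i → i ≤ n → leftCol T i ≤ D.L i)
    (hF : ∀ c, D.IsFreeCell c → IsFree T c → c ∈ D.F → c ∈ T.cells) : Lhd D.toFB T :=
  lhd_iff.2 ⟨upRow_le_upRow fun j h1 h2 => (hU j h1 h2).trans_eq (D.upRow_toFB h1 h2).symm,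
    leftCol_le_leftCol fun i h1 h2 => (hL i h1 h2).trans_eq (D.leftCol_toFB h1 h2).symm,
    fun c hD hT hc => hF c ((isFree_toFB_iff D).1 hD) hT ((D.mem_toFB_iff_of_isFree hD).1 hc)⟩

end ArrowData

section Join

variable {x y z A : FB n} {t : ℕ}

/-- The row of the up-arrow of column `j` in the join of `x` and `z`. -/
noncomputable def joinU (x z : FB n) (j : ℕ) : ℕ :=
  sSup {t | t ≤ upRow x j ∧ t ≤ upRow z j ∧ j < leftCol x t ∧ j < leftCol z t}

lemma le_joinU (htx : t ≤ upRow x j) (htz : t ≤ upRow z j) (hx : j < leftCol x t)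
    (hz : j < leftCol z t) : t ≤ joinU x z j :=
  le_csSup ⟨upRow x j, fun _ h => h.1⟩ ⟨htx, htz, hx, hz⟩

lemma joinU_le_left : joinU x z j ≤ upRow x j := csSup_le' fun _ h => h.1

lemma joinU_le_right : joinU x z j ≤ upRow z j := csSup_le' fun _ h => h.2.1

lemma lt_leftCol_joinU (h1 : 1 ≤ j) (h2 : j < n) :
    j < leftCol x (joinU x z j) ∧ j < leftCol z (joinU x z j) :=
  (Nat.sSup_mem
    (s := {t | t ≤ upRow x j ∧ t ≤ upRow z j ∧ j < leftCol x t ∧ j < leftCol z t})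
    ⟨1, one_le_upRow x h1 h2.le, one_le_upRow z h1 h2.le, by rwa [leftCol_one],
      by rwa [leftCol_one]⟩ ⟨upRow x j, fun _ h => h.1⟩).2.2

variable (x z) in
noncomputable def joinData : ArrowData n where
  L i := min (leftCol x i) (leftCol z i)
  U := joinU x z
  F := {c | IsBorder n c ∨ (IsFree x c ∧ c ∈ x.cells) ∨ (IsFree z c ∧ c ∈ z.cells)}
  one_le := x.one_le
  sub_one_le_L i h1 h2 := le_min (sub_one_le_leftCol x h1 h2) (sub_one_le_leftCol z h1 h2)
  L_le i _ _ := (min_le_left _ _).trans (leftCol_le x i)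
  one_le_U j h1 h2 := by
    by_contra h0
    have := (lt_leftCol_joinU (x := x) (z := z) h1 h2).1
    rw [show joinU x z j = 0 by omega, leftCol_eq_zero x (Or.inl rfl)] at this
    omega
  U_le j h1 h2 := joinU_le_left.trans (upRow_le_add_one x h1 h2)
  L_supported i h1 h2 := by
    rcases min_cases (leftCol x i) (leftCol z i) with ⟨h, -⟩ | ⟨h, -⟩ <;> rw [h] <;> right
    · exact joinU_le_left.trans_lt (upRow_leftCol_lt x h1 h2)
    · exact joinU_le_right.trans_lt (upRow_leftCol_lt z h1 h2)
  U_supported j h1 h2 := Or.inr (lt_min (lt_leftCol_joinU h1 h2).1 (lt_leftCol_joinU h1 h2).2)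
  border_mem_F _ h := Or.inl h

lemma lhd_joinData_left : Lhd x (joinData x z).toFB :=
  ArrowData.lhd_toFB _ (fun _ _ _ => joinU_le_left) (fun _ _ _ => min_le_left _ _)
    fun _ hx _ hc => Or.inr (Or.inl ⟨hx, hc⟩)

lemma lhd_joinData_right : Lhd z (joinData x z).toFB :=
  ArrowData.lhd_toFB _ (fun _ _ _ => joinU_le_right) (fun _ _ _ => min_le_right _ _)
    fun _ hz _ hc => Or.inr (Or.inr ⟨hz, hc⟩)

lemma IsJoin.lhd_joinData (h : IsJoin x z A) : Lhd A (joinData x z).toFB :=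
  h.2.2 _ lhd_joinData_left lhd_joinData_right

lemma IsJoin.leftCol_eq (h : IsJoin x z A) (i : ℕ) :
    leftCol A i = min (leftCol x i) (leftCol z i) := by
  refine le_antisymm (le_min (h.1.leftCol_le i) (h.2.1.leftCol_le i)) ?_
  by_cases hi : 2 ≤ i ∧ i ≤ n
  · have := h.lhd_joinData.leftCol_le i
    rwa [ArrowData.leftCol_toFB _ hi.1 hi.2] at this
  · rw [leftCol_eq_leftCol A x (by omega)]
    exact min_le_left _ _

lemma IsJoin.le_upRow (h : IsJoin x z A) (htx : t ≤ upRow x j) (htz : t ≤ upRow z j)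
    (hj : j < leftCol A t) : t ≤ upRow A j := by
  rw [h.leftCol_eq, lt_min_iff] at hj
  rcases (show j = 0 ∨ 1 ≤ j by omega) with rfl | hj1
  · rw [upRow_eq_zero x (Or.inl rfl)] at htx
    omega
  calc t ≤ joinU x z j := le_joinU htx htz hj.1 hj.2
    _ = upRow (joinData x z).toFB j :=
      ((joinData x z).upRow_toFB hj1 (hj.1.trans_le (leftCol_le x t))).symm
    _ ≤ upRow A j := h.lhd_joinData.upRow_le j

lemma IsJoin.upRow_eq_of_eq (h : IsJoin x y A) (hxy : upRow x j = upRow y j) :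
    upRow A j = upRow x j := by
  refine le_antisymm (h.1.upRow_le j) ?_
  by_cases hj : 1 ≤ j ∧ j < n
  · refine h.le_upRow le_rfl hxy.le ?_
    rw [h.leftCol_eq, lt_min_iff, hxy]
    exact ⟨hxy ▸ lt_leftCol_upRow x hj.1 hj.2, lt_leftCol_upRow y hj.1 hj.2⟩
  · exact (upRow_eq_upRow x A (by omega)).le

lemma IsJoin.mem_cases (h : IsJoin x z A) (hA : IsFree A c) (hc : c ∈ A.cells) :
    IsBorder n c ∨ (IsFree x c ∧ c ∈ x.cells) ∨ (IsFree z c ∧ c ∈ z.cells) := by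
  obtain ⟨h1, h2, -, -⟩ := hA.bounds
  obtain ⟨hcell, hU, hL⟩ := isFree_iff.1 hA
  have hfree : IsFree (joinData x z).toFB c := by
    refine isFree_iff.2 ⟨hcell, (h.lhd_joinData.upRow_le c.2).trans_lt hU, ?_⟩
    rw [ArrowData.leftCol_toFB _ h1 h2]
    exact (h.leftCol_eq c.1).symm.trans_gt hL
  exact ((joinData x z).mem_toFB_iff_of_isFree hfree).1 (h.lhd_joinData.mem hA hfree hc)

end Join

section Meet

variable {x y z m : FB n} {s : ℕ}

/-- The column of the left-arrow of row `i` in the meet of `x` and `y`. -/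
noncomputable def meetL (x y : FB n) (i : ℕ) : ℕ :=
  sInf {s | leftCol x i ≤ s ∧ leftCol y i ≤ s ∧ max (upRow x s) (upRow y s) < i}

lemma meetL_le (hx : leftCol x i ≤ s) (hy : leftCol y i ≤ s)
    (hs : max (upRow x s) (upRow y s) < i) : meetL x y i ≤ s :=
  Nat.sInf_le ⟨hx, hy, hs⟩

lemma meetL_mem (hi : 2 ≤ i) : leftCol x i ≤ meetL x y i ∧ leftCol y i ≤ meetL x y i ∧
    max (upRow x (meetL x y i)) (upRow y (meetL x y i)) < i :=
  Nat.sInf_mem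
    (s := {s | leftCol x i ≤ s ∧ leftCol y i ≤ s ∧ max (upRow x s) (upRow y s) < i})
    ⟨n, leftCol_le x i, leftCol_le y i, by rw [upRow_self, upRow_self]; omega⟩

variable (x y) in
noncomputable def meetData : ArrowData n where
  L := meetL x y
  U j := max (upRow x j) (upRow y j)
  F := {c | (IsFree x c → c ∈ x.cells) ∧ (IsFree y c → c ∈ y.cells)}
  one_le := x.one_le
  sub_one_le_L i h1 h2 := (sub_one_le_leftCol x h1 h2).trans (meetL_mem h1).1
  L_le i h1 _ := meetL_le (leftCol_le x i) (leftCol_le y i)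
    (by rw [upRow_self, upRow_self]; omega)
  one_le_U j h1 h2 := (one_le_upRow x h1 h2.le).trans (le_max_left _ _)
  U_le j h1 h2 := max_le (upRow_le_add_one x h1 h2) (upRow_le_add_one y h1 h2)
  L_supported i h1 _ := Or.inr (meetL_mem h1).2.2
  U_supported j h1 h2 := by
    by_cases h : max (upRow x j) (upRow y j) = 1
    · exact Or.inl h
    refine Or.inr ?_
    have := one_le_upRow x h1 h2.le
    rcases max_cases (upRow x j) (upRow y j) with ⟨he, -⟩ | ⟨he, -⟩ <;> rw [he] at h ⊢
    · exact (lt_leftCol_upRow x h1 h2).trans_le (meetL_mem (by omega)).1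
    · have := one_le_upRow y h1 h2.le
      exact (lt_leftCol_upRow y h1 h2).trans_le (meetL_mem (by omega)).2.1
  border_mem_F c hc := ⟨fun _ => x.border_mem c hc, fun _ => y.border_mem c hc⟩

lemma meetData_lhd_left : Lhd (meetData x y).toFB x :=
  ArrowData.toFB_lhd _ (fun _ _ _ => le_max_left _ _) (fun _ h1 _ => (meetL_mem h1).1)
    fun _ _ hx hF => hF.1 hx

lemma meetData_lhd_right : Lhd (meetData x y).toFB y :=
  ArrowData.toFB_lhd _ (fun _ _ _ => le_max_right _ _) (fun _ h1 _ => (meetL_mem h1).2.1)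
    fun _ _ hy hF => hF.2 hy

lemma IsMeet.meetData_lhd (h : IsMeet x y m) : Lhd (meetData x y).toFB m :=
  h.2.2 _ meetData_lhd_left meetData_lhd_right

lemma IsMeet.upRow_eq (h : IsMeet x y m) (j : ℕ) :
    upRow m j = max (upRow x j) (upRow y j) := by
  refine le_antisymm ?_ (max_le (h.1.upRow_le j) (h.2.1.upRow_le j))
  by_cases hj : 1 ≤ j ∧ j < n
  · have := h.meetData_lhd.upRow_le j
    rwa [ArrowData.upRow_toFB _ hj.1 hj.2] at this
  · rw [upRow_eq_upRow m x (by omega)]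
    exact le_max_left _ _

lemma IsMeet.leftCol_le (h : IsMeet x y m) (hx : leftCol x i ≤ s) (hy : leftCol y i ≤ s)
    (hs : upRow m s < i) : leftCol m i ≤ s := by
  by_cases hi : 2 ≤ i ∧ i ≤ n
  · calc leftCol m i ≤ leftCol (meetData x y).toFB i := h.meetData_lhd.leftCol_le i
      _ = meetL x y i := (meetData x y).leftCol_toFB hi.1 hi.2
      _ ≤ s := meetL_le hx hy (h.upRow_eq s ▸ hs)
  · rw [leftCol_eq_leftCol m x (by omega)]
    exact hx

lemma IsMeet.leftCol_eq_of_eq (h : IsMeet x y m) (hxy : leftCol x i = leftCol y i) :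
    leftCol m i = leftCol x i := by
  refine le_antisymm ?_ (h.1.leftCol_le i)
  by_cases hi : 2 ≤ i ∧ i ≤ n
  · refine h.leftCol_le le_rfl hxy.ge ?_
    rw [h.upRow_eq, max_lt_iff]
    exact ⟨upRow_leftCol_lt x hi.1 hi.2, hxy ▸ upRow_leftCol_lt y hi.1 hi.2⟩
  · exact (leftCol_eq_leftCol m x (by omega)).le

lemma IsMeet.mem (h : IsMeet x y m) (hm : IsFree m c) (hx : IsFree x c → c ∈ x.cells)
    (hy : IsFree y c → c ∈ y.cells) : c ∈ m.cells := by
  obtain ⟨h1, h2, -, h4⟩ := hm.bounds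
  obtain ⟨hcell, hU, hL⟩ := isFree_iff.1 hm
  have hfree : IsFree (meetData x y).toFB c := (ArrowData.isFree_toFB_iff _).2 ⟨hcell, h1, h4,
    (h.upRow_eq c.2).symm.trans_lt hU,
    hL.trans_le ((h.meetData_lhd.leftCol_le c.1).trans_eq ((meetData x y).leftCol_toFB h1 h2))⟩
  exact h.meetData_lhd.mem hfree hm (((meetData x y).mem_toFB_iff_of_isFree hfree).2 ⟨hx, hy⟩)

end Meet

section Semidistributivity

variable {x y z m p w A B : FB n}

lemma join_semidistrib_leftCol_le (hxz : IsJoin x z A) (hyz : IsJoin y z A) (hm : IsMeet x y m)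
    (hw : IsJoin m z w) : leftCol w ≤ leftCol A := fun i => by
  rw [hxz.leftCol_eq]
  rcases le_or_gt (leftCol z i) (leftCol x i) with hzx | hxz'
  · rw [min_eq_right hzx]
    exact hw.2.1.leftCol_le i
  have hyx : leftCol y i = leftCol x i := by
    have e := (hxz.leftCol_eq i).symm.trans (hyz.leftCol_eq i)
    simp only [min_def] at e
    split_ifs at e <;> omega
  calc leftCol w i ≤ leftCol m i := hw.1.leftCol_le i
    _ = leftCol x i := hm.leftCol_eq_of_eq hyx.symm
    _ = min (leftCol x i) (leftCol z i) := (min_eq_left hxz'.le).symm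

lemma join_semidistrib_upRow_le (hxz : IsJoin x z A) (hyz : IsJoin y z A) (hm : IsMeet x y m)
    (hw : IsJoin m z w) (hL : leftCol w = leftCol A) : upRow w ≤ upRow A := fun j => by
  by_cases hj : 1 ≤ j ∧ j < n
  · have hjt : j < leftCol A (upRow w j) := hL ▸ lt_leftCol_upRow w hj.1 hj.2
    have htz : upRow w j ≤ upRow z j := hw.2.1.upRow_le j
    rcases le_max_iff.1 ((hw.1.upRow_le j).trans_eq (hm.upRow_eq j)) with htx | hty
    · exact hxz.le_upRow htx htz hjt
    · exact hyz.le_upRow hty htz hjt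
  · exact (upRow_eq_upRow w A (by omega)).le

lemma join_semidistrib_mem (hxz : IsJoin x z A) (hyz : IsJoin y z A) (hm : IsMeet x y m)
    (hw : IsJoin m z w) (hA : IsFree A c) (hwc : IsFree w c) (hc : c ∈ A.cells) :
    c ∈ w.cells := by
  rcases hxz.mem_cases hA hc with hb | ⟨hx, hcx⟩ | ⟨hz, hcz⟩
  · exact w.border_mem c hb
  · rcases hyz.mem_cases hA hc with hb | ⟨hy, hcy⟩ | ⟨hz, hcz⟩
    · exact w.border_mem c hb
    · obtain ⟨hcell, hUx, hLx⟩ := isFree_iff.1 hx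
      have hmc : IsFree m c := isFree_iff.2 ⟨hcell,
        (hm.upRow_eq c.2).trans_lt (max_lt hUx (isFree_iff.1 hy).2.1),
        hLx.trans_le (hm.1.leftCol_le c.1)⟩
      exact hw.1.mem hmc hwc (hm.mem hmc (fun _ => hcx) fun _ => hcy)
    · exact hw.2.1.mem hz hwc hcz
  · exact hw.2.1.mem hz hwc hcz

lemma join_semidistrib (hxz : IsJoin x z A) (hyz : IsJoin y z A) (hm : IsMeet x y m)
    (hw : IsJoin m z w) : w = A := by
  have hwA : Lhd w A := hw.2.2 A (hm.1.trans hxz.1) hxz.2.1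
  have hL : leftCol w = leftCol A :=
    (join_semidistrib_leftCol_le hxz hyz hm hw).antisymm hwA.leftCol_le
  exact hwA.antisymm (lhd_iff.2 ⟨join_semidistrib_upRow_le hxz hyz hm hw hL, hL.le,
    fun _ => join_semidistrib_mem hxz hyz hm hw⟩)

lemma meet_semidistrib_upRow_le (hxz : IsMeet x z B) (hyz : IsMeet y z B) (hp : IsJoin x y p)
    (hw : IsMeet p z w) : upRow B ≤ upRow w := fun j => by
  rw [hxz.upRow_eq]
  rcases le_or_gt (upRow x j) (upRow z j) with hxz' | hzx
  · rw [max_eq_right hxz']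
    exact hw.2.1.upRow_le j
  have hyx : upRow y j = upRow x j := by
    have e := (hxz.upRow_eq j).symm.trans (hyz.upRow_eq j)
    simp only [max_def] at e
    split_ifs at e <;> omega
  calc max (upRow x j) (upRow z j) = upRow x j := max_eq_left hzx.le
    _ = upRow p j := (hp.upRow_eq_of_eq hyx.symm).symm
    _ ≤ upRow w j := hw.1.upRow_le j

lemma meet_semidistrib_leftCol_le (hxz : IsMeet x z B) (hyz : IsMeet y z B) (hp : IsJoin x y p)
    (hw : IsMeet p z w) (hU : upRow w = upRow B) : leftCol B ≤ leftCol w := fun i => by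
  by_cases hi : 2 ≤ i ∧ i ≤ n
  · have hs : upRow B (leftCol w i) < i := hU ▸ upRow_leftCol_lt w hi.1 hi.2
    have hzs : leftCol z i ≤ leftCol w i := hw.2.1.leftCol_le i
    rcases min_le_iff.1 ((hp.leftCol_eq i).symm.trans_le (hw.1.leftCol_le i)) with hxs | hys
    · exact hxz.leftCol_le hxs hzs hs
    · exact hyz.leftCol_le hys hzs hs
  · exact (leftCol_eq_leftCol B w (by omega)).le

lemma meet_semidistrib_mem (hxz : IsMeet x z B) (hyz : IsMeet y z B) (hp : IsJoin x y p)
    (hw : IsMeet p z w) (hwc : IsFree w c) (hB : IsFree B c) (hc : c ∈ w.cells) :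
    c ∈ B.cells := by
  have hz : IsFree z c → c ∈ z.cells := fun hz => hw.2.1.mem hwc hz hc
  by_cases hx : IsFree x c
  · by_cases hy : IsFree y c
    · obtain ⟨hcell, hUx, hLx⟩ := isFree_iff.1 hx
      have hpc : IsFree p c := isFree_iff.2 ⟨hcell, (hp.1.upRow_le c.2).trans_lt hUx,
        (hp.leftCol_eq c.1).trans_gt (lt_min hLx (isFree_iff.1 hy).2.2)⟩
      rcases hp.mem_cases hpc (hw.1.mem hwc hpc hc) with hb | ⟨-, hcx⟩ | ⟨-, hcy⟩
      · exact B.border_mem c hb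
      · exact hxz.mem hB (fun _ => hcx) hz
      · exact hyz.mem hB (fun _ => hcy) hz
    · exact hyz.mem hB (absurd · hy) hz
  · exact hxz.mem hB (absurd · hx) hz

lemma meet_semidistrib (hxz : IsMeet x z B) (hyz : IsMeet y z B) (hp : IsJoin x y p)
    (hw : IsMeet p z w) : w = B := by
  have hBw : Lhd B w := hw.2.2 B (hxz.1.trans hp.1) hxz.2.1
  have hU : upRow w = upRow B :=
    hBw.upRow_le.antisymm (meet_semidistrib_upRow_le hxz hyz hp hw)
  exact (lhd_iff.2 ⟨hU.ge, meet_semidistrib_leftCol_le hxz hyz hp hw hU,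
    fun _ => meet_semidistrib_mem hxz hyz hp hw⟩).antisymm hBw

end Semidistributivity

theorem esTam_semidistributive_general (n : ℕ) :
    (∀ x y z xz yz : FB n, IsJoin x z xz → IsJoin y z yz → xz = yz →
      ∀ xy w : FB n, IsMeet x y xy → IsJoin xy z w → w = xz) ∧
    (∀ x y z xz yz : FB n, IsMeet x z xz → IsMeet y z yz → xz = yz →
      ∀ xy w : FB n, IsJoin x y xy → IsMeet xy z w → w = xz) := by
  refine ⟨?_, ?_⟩
  · rintro x y z xz _ hxz hyz rfl xy w hxy hw
    exact join_semidistrib hxz hyz hxy hw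
  · rintro x y z xz _ hxz hyz rfl xy w hxy hw
    exact meet_semidistrib hxz hyz hxy hw

/-- the lattice `esTam n` is semidistributive. -/
theorem esTam_semidistributive (n : ℕ) (hn : 1 ≤ n) :
    (∀ x y z xz yz : FB n, IsJoin x z xz → IsJoin y z yz → xz = yz →
      ∀ xy w : FB n, IsMeet x y xy → IsJoin xy z w → w = xz) ∧
    (∀ x y z xz yz : FB n, IsMeet x z xz → IsMeet y z yz → xz = yz →
      ∀ xy w : FB n, IsJoin x y xy → IsMeet xy z w → w = xz) :=
  esTam_semidistributive_general n

end EsTam
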